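/- For $0 < u, v < 1$ with $u \ne v$, the function $G(u,v;1) = \frac{(u+v)^{u+v}(2-u-v)^{2-u-v}}{u^u v^v (1-u)^{1-u}(1-v)^{1-v}}$ satisfies $G(u,v;1) < 4$, and $G(u,u;1) = 4$ for all $u \in (0,1)$. -/

import Mathlib

noncomputable def Gone (u v : ℝ) : ℝ :=
  (u + v) ^ (u + v) * (2 - u - v) ^ (2 - u - v) /
    (u ^ u * v ^ v * (1 - u) ^ (1 - u) * (1 - v) ^ (1 - v))

/-! Strict convexity of `t ↦ t log t` at the midpoint gives `(x + y)^(x + y) < 2^(x + y) x^x y^y`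
for positive `x ≠ y`, with equality when `x = y`. Applying this to the pairs `(u, v)` and
`(1 - u, 1 - v)` bounds `G(u, v; 1)` by `2^(u + v) · 2^(2 - u - v) = 4`. -/

open Real

lemma add_mul_log_half_add_lt {x y : ℝ} (hx : 0 < x) (hy : 0 < y) (hxy : x ≠ y) :
    (x + y) * log ((x + y) / 2) < x * log x + y * log y := by
  have h := strictConvexOn_mul_log.2 (Set.mem_Ici.2 hx.le) (Set.mem_Ici.2 hy.le) hxy
    (by norm_num : (0:ℝ) < 1/2) (by norm_num : (0:ℝ) < 1/2) (by norm_num)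
  simp only [smul_eq_mul] at h
  rw [show (1/2 : ℝ) * x + 1/2 * y = (x + y) / 2 by ring] at h
  linarith

lemma add_rpow_add_lt {x y : ℝ} (hx : 0 < x) (hy : 0 < y) (hxy : x ≠ y) :
    (x + y) ^ (x + y) < 2 ^ (x + y) * (x ^ x * y ^ y) := by
  have hxy' : 0 < x + y := by positivity
  rw [← log_lt_log_iff (by positivity) (by positivity), log_mul (by positivity) (by positivity),
    log_mul (by positivity) (by positivity), log_rpow hxy', log_rpow two_pos, log_rpow hx,
    log_rpow hy]
  have := add_mul_log_half_add_lt hx hy hxy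
  rw [log_div hxy'.ne' two_ne_zero] at this
  linarith

lemma add_self_rpow_add_self {x : ℝ} (hx : 0 < x) :
    (x + x) ^ (x + x) = 2 ^ (x + x) * (x ^ x * x ^ x) := by
  rw [← rpow_add hx, ← mul_rpow two_pos.le hx.le, two_mul]

lemma two_rpow_add_mul_two_rpow_one_sub_add (u v : ℝ) :
    (2:ℝ) ^ (u + v) * 2 ^ ((1 - u) + (1 - v)) = 4 := by
  rw [← rpow_add two_pos, show u + v + ((1 - u) + (1 - v)) = 2 by ring]
  norm_num

theorem Gone_lt_four (u v : ℝ) (hu : u ∈ Set.Ioo (0:ℝ) 1) (hv : v ∈ Set.Ioo (0:ℝ) 1) :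
    (u ≠ v → Gone u v < 4) ∧ Gone u u = 4 := by
  obtain ⟨hu0, hu1⟩ := hu
  obtain ⟨hv0, hv1⟩ := hv
  have hu1' : 0 < 1 - u := sub_pos.2 hu1
  have hv1' : 0 < 1 - v := sub_pos.2 hv1
  refine ⟨fun hne => ?_, ?_⟩
  · have hne' : 1 - u ≠ 1 - v := fun h => hne (by linarith)
    rw [Gone, show 2 - u - v = (1 - u) + (1 - v) by ring, div_lt_iff₀ (by positivity)]
    calc (u + v) ^ (u + v) * ((1 - u) + (1 - v)) ^ ((1 - u) + (1 - v))
        < 2 ^ (u + v) * (u ^ u * v ^ v) *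
            (2 ^ ((1 - u) + (1 - v)) * ((1 - u) ^ (1 - u) * (1 - v) ^ (1 - v))) :=
          mul_lt_mul'' (add_rpow_add_lt hu0 hv0 hne) (add_rpow_add_lt hu1' hv1' hne')
            (by positivity) (by positivity)
      _ = 4 * (u ^ u * v ^ v * (1 - u) ^ (1 - u) * (1 - v) ^ (1 - v)) := by
          rw [← two_rpow_add_mul_two_rpow_one_sub_add u v]; ring
  · rw [Gone, show 2 - u - u = (1 - u) + (1 - u) by ring, add_self_rpow_add_self hu0,
      add_self_rpow_add_self hu1', ← two_rpow_add_mul_two_rpow_one_sub_add u u]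
    field_simp
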